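/- arXiv:2508.18844 — 6 statements merged into one kernel-verified Lean document; each statement's English description precedes it below -/
import Mathlib

section
/- Let m ≥ 4 and let Π be a hyperplane of the Plücker projective space P(⋀^2 V) such that |Π ∩ G(2,V)| < e(2,m). Then |Π ∩ G(2,V)| ≤ e'(2,m) = [m 2]_q − q^{2(m−2)} − q^{2(m−2)−2}. -/
open Module

/-- The Gaussian binomial coefficient `[m ℓ]_q`, as a rational number. -/
noncomputable def gaussBinom (q m l : ℕ) : ℚ :=
  ∏ i ∈ Finset.range l, ((q : ℚ) ^ (m - i) - 1) / ((q : ℚ) ^ (i + 1) - 1)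

/-- `e(ℓ,m) = [m ℓ]_q − q^{ℓ(m−ℓ)}`. -/
noncomputable def eG (q l m : ℕ) : ℚ :=
  gaussBinom q m l - (q : ℚ) ^ (l * (m - l))

/-- `e'(ℓ,m) = [m ℓ]_q − q^{ℓ(m−ℓ)} − q^{ℓ(m−ℓ)−2}`. -/
noncomputable def eG' (q l m : ℕ) : ℚ :=
  gaussBinom q m l - (q : ℚ) ^ (l * (m - l)) - (q : ℚ) ^ (l * (m - l) - 2)

variable (F : Type*) [Field F] (V : Type*) [AddCommGroup V] [Module F V]

/-- The wedge product `v₁ ∧ ⋯ ∧ vₙ` as an element of the `n`-th exterior power. -/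
noncomputable def wedge (n : ℕ) (v : Fin n → V) : ⋀[F]^n V :=
  ⟨ExteriorAlgebra.ιMulti F n v, ExteriorAlgebra.ιMulti_range F n (Set.mem_range_self v)⟩

/-- The product `w₁ ∧ ⋯ ∧ w_k ∧ x` for `x` in the `l`-th exterior power, landing in the
`n`-th exterior power, where `k + l = n`. -/
noncomputable def mulWedge (k l n : ℕ) (h : k + l = n) (w : Fin k → V) (x : ⋀[F]^l V) :
    ⋀[F]^n V :=
  ⟨ExteriorAlgebra.ιMulti F k w * (x : ExteriorAlgebra F V), by
    subst h
    have hmem : ExteriorAlgebra.ιMulti F k w * (x : ExteriorAlgebra F V) ∈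
        (LinearMap.range (ExteriorAlgebra.ι F : V →ₗ[F] ExteriorAlgebra F V)) ^ k *
          (LinearMap.range (ExteriorAlgebra.ι F : V →ₗ[F] ExteriorAlgebra F V)) ^ l :=
      Submodule.mul_mem_mul (ExteriorAlgebra.ιMulti_range F k (Set.mem_range_self w)) x.2
    rw [← pow_add] at hmem
    exact hmem⟩

/-- An `ℓ`-dimensional subspace `L` of `V` lies on the hyperplane of the Plücker projective
space determined by the nonzero functional `φ : ⋀[F]^ℓ V →ₗ[F] F` if
`φ (ω₁ ∧ ⋯ ∧ ω_ℓ) = 0` for some (equivalently, every) basis `ω₁, …, ω_ℓ` of `L`. -/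
def LiesOn (l : ℕ) (φ : ⋀[F]^l V →ₗ[F] F) (L : Submodule F V) : Prop :=
  ∃ ω : Fin l → V, (∀ i, ω i ∈ L) ∧ LinearIndependent F ω ∧
    Submodule.span F (Set.range ω) = L ∧ φ (wedge F V l ω) = 0

/-- The hyperplane determined by `φ : ⋀[F]^ℓ V →ₗ[F] F` is decomposable if there exist vectors
`w₁, …, w_{m−ℓ} ∈ V` and a nonzero linear functional `ψ : ⋀[F]^m V →ₗ[F] F` such that
`φ x = ψ (w₁ ∧ ⋯ ∧ w_{m−ℓ} ∧ x)` for all `x ∈ ⋀[F]^ℓ V`. -/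
def IsDecomposable (m l : ℕ) (h : l ≤ m) (φ : ⋀[F]^l V →ₗ[F] F) : Prop :=
  ∃ (w : Fin (m - l) → V) (ψ : ⋀[F]^m V →ₗ[F] F), ψ ≠ 0 ∧
    ∀ x : ⋀[F]^l V, φ x = ψ (mulWedge F V (m - l) l m (Nat.sub_add_cancel h) w x)

/-!
A functional `φ` on `⋀² V` is the alternating form `B (u, v) = φ (u ∧ v)`, and a plane lies on
the hyperplane exactly when `B` vanishes on it. Counting ordered bases of such planes in two
ways, plane by plane or by their first vector, gives
`N (q² - 1) (q² - q) = (q^k - 1) (q^m - q) + (q^m - q^k) (q^(m-1) - q)` with `k` the dimension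
of the radical of `B`; this is increasing in `k`. As `B ≠ 0` and the rank `m - k` of an
alternating form is even, either `k = m - 2`, giving `N = e(2,m)`, or `k ≤ m - 4`, giving
`N ≤ e'(2,m)`.
-/

namespace AlternatingMap

variable {R M N : Type*} [CommRing R] [AddCommGroup M] [Module R M] [AddCommGroup N] [Module R N]

def toLinearMap₂ (f : M [⋀^Fin 2]→ₗ[R] N) : M →ₗ[R] M →ₗ[R] N :=
  LinearMap.mk₂ R (fun u v => f ![u, v])
    (fun u u' v => f.map_vecCons_add ![v] u u')
    (fun a u v => f.map_vecCons_smul ![v] a u)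
    (fun u v v' => (f.curryLeft u).map_vecCons_add ![] v v')
    (fun a u v => (f.curryLeft u).map_vecCons_smul ![] a v)

variable (f : M [⋀^Fin 2]→ₗ[R] N)

@[simp]
lemma toLinearMap₂_apply (u v : M) : f.toLinearMap₂ u v = f ![u, v] := rfl

lemma toLinearMap₂_apply_fin_two (ω : Fin 2 → M) : f.toLinearMap₂ (ω 0) (ω 1) = f ω :=
  congr_arg f (FinVec.etaExpand_eq ω)

lemma isAlt_toLinearMap₂ : f.toLinearMap₂.IsAlt :=
  fun u => f.map_eq_zero_of_eq ![u, u] (i := 0) (j := 1) rfl (by decide)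

lemma toLinearMap₂_eq_zero_iff : f.toLinearMap₂ = 0 ↔ f = 0 := by
  refine ⟨fun h => ?_, fun h => by ext; simp [h]⟩
  ext ω
  rw [← toLinearMap₂_apply_fin_two, h]
  rfl

end AlternatingMap

section WedgeForm

variable {R M : Type*} [CommRing R] [AddCommGroup M] [Module R M]

noncomputable def wedgeForm (φ : ⋀[R]^2 M →ₗ[R] R) : M →ₗ[R] M →ₗ[R] R :=
  (φ.compAlternatingMap (exteriorPower.ιMulti R 2)).toLinearMap₂

lemma isAlt_wedgeForm (φ : ⋀[R]^2 M →ₗ[R] R) : (wedgeForm φ).IsAlt :=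
  AlternatingMap.isAlt_toLinearMap₂ _

lemma wedgeForm_ne_zero {φ : ⋀[R]^2 M →ₗ[R] R} (hφ : φ ≠ 0) : wedgeForm φ ≠ 0 := by
  rw [wedgeForm, Ne, AlternatingMap.toLinearMap₂_eq_zero_iff]
  exact fun h => hφ (exteriorPower.linearMap_ext (by rw [h]; rfl))

end WedgeForm

open Submodule in
lemma LinearMap.IsAlt.apply_eq_zero_of_mem_span {R M N : Type*} [CommRing R] [AddCommGroup M]
    [Module R M] [AddCommGroup N] [Module R N] {B : M →ₗ[R] M →ₗ[R] N} (hB : B.IsAlt)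
    {ω : Fin 2 → M} (hω : B (ω 0) (ω 1) = 0) {x y : M}
    (hx : x ∈ span R (Set.range ω)) (hy : y ∈ span R (Set.range ω)) : B x y = 0 := by
  obtain ⟨c, rfl⟩ := (mem_span_range_iff_exists_fun R).mp hx
  obtain ⟨d, rfl⟩ := (mem_span_range_iff_exists_fun R).mp hy
  have hω' : B (ω 1) (ω 0) = 0 := by rw [← hB.neg, hω, neg_zero]
  simp [Fin.sum_univ_two, hB.self_eq_zero, hω, hω']

namespace LinearMap.IsAlt

open Submodule

variable {K M : Type*} [Field K] [AddCommGroup M] [Module K M] {B : M →ₗ[K] M →ₗ[K] K}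

lemma ker_le_ker_inf_ker (hB : B.IsAlt) (u v : M) : ker B ≤ ker (B u) ⊓ ker (B v) := by
  intro x hx
  rw [mem_ker] at hx
  exact ⟨by simp [← hB.neg, hx], by simp [← hB.neg, hx]⟩

lemma finrank_ker_inf_ker_add_two [FiniteDimensional K M] (hB : B.IsAlt) {u v : M}
    (huv : B u v = 1) : finrank K ↥(ker (B u) ⊓ ker (B v)) + 2 = finrank K M := by
  have hvu : B v u = -1 := by rw [← hB.neg, huv]
  have hsurj : Function.Surjective ((B u).prod (B v)) := fun ⟨a, b⟩ =>
    ⟨a • v - b • u, by simp [hB.self_eq_zero, huv, hvu]⟩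
  have h := LinearMap.finrank_range_add_finrank_ker ((B u).prod (B v))
  rw [LinearMap.range_eq_top.mpr hsurj, finrank_top, finrank_prod, finrank_self, ker_prod] at h
  omega

lemma comap_subtype_ker (hB : B.IsAlt) {u v : M} (huv : B u v = 1) :
    (ker B).comap (ker (B u) ⊓ ker (B v)).subtype =
      ker (B.domRestrict₁₂ (ker (B u) ⊓ ker (B v)) (ker (B u) ⊓ ker (B v))) := by
  have hvu : B v u = -1 := by rw [← hB.neg, huv]
  ext ⟨w, hw⟩
  simp only [mem_comap, subtype_apply, mem_ker]
  constructor
  · intro h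
    ext x
    simp [domRestrict₁₂_apply, h]
  · intro h
    ext x
    -- `w` is orthogonal to `u`, `v` and `x' = x - B u x • v + B v x • u ∈ W`, which span `x`
    set x' := x - B u x • v + B v x • u
    have hx' : x' ∈ ker (B u) ⊓ ker (B v) := by
      simp [x', hB.self_eq_zero, huv, hvu]
    have hwx' : B w x' = 0 := by
      simpa [domRestrict₁₂_apply] using LinearMap.congr_fun h ⟨x', hx'⟩
    simp only [mem_inf, mem_ker] at hw
    have hwu : B w u = 0 := by rw [← hB.neg, hw.1, neg_zero]
    have hwv : B w v = 0 := by rw [← hB.neg, hw.2, neg_zero]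
    simpa [x', hwu, hwv] using hwx'

theorem even_finrank_sub_finrank_ker [FiniteDimensional K M] (hB : B.IsAlt) :
    Even (finrank K M - finrank K (ker B)) := by
  induction hn : finrank K M using Nat.strong_induction_on generalizing M with
  | _ n ih =>
  by_cases hB0 : B = 0
  · rw [hB0, ker_zero, finrank_top, hn, Nat.sub_self]
    exact Even.zero
  obtain ⟨u, v, huv⟩ : ∃ u v, B u v ≠ 0 := by
    by_contra! h
    exact hB0 (LinearMap.ext₂ h)
  have huv' : B u ((B u v)⁻¹ • v) = 1 := by simp [huv]
  set W := ker (B u) ⊓ ker (B ((B u v)⁻¹ • v))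
  have hW : finrank K W + 2 = n := hn ▸ hB.finrank_ker_inf_ker_add_two huv'
  have hker : finrank K (ker (B.domRestrict₁₂ W W)) = finrank K (ker B) := by
    rw [← hB.comap_subtype_ker huv']
    exact (comapSubtypeEquivOfLe (hB.ker_le_ker_inf_ker _ _)).finrank_eq
  have hle : finrank K (ker B) ≤ finrank K W := hker ▸ Submodule.finrank_le _
  obtain ⟨t, ht⟩ :=
    ih (finrank K W) (by omega) (B := B.domRestrict₁₂ W W) (fun w => hB w) rfl
  exact ⟨t + 1, by omega⟩

end LinearMap.IsAlt

section Counting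

open Submodule

variable {K M : Type*} [Field K] [Fintype K] [AddCommGroup M] [Module K M] [FiniteDimensional K M]

local notation "q" => Fintype.card K

lemma natCard_submodule_eq_pow (s : Submodule K M) : Nat.card s = q ^ finrank K s := by
  rw [Module.natCard_eq_pow_finrank (K := K), Nat.card_eq_fintype_card]

lemma card_mem_and_notMem_of_le {s t : Submodule K M} (hst : s ≤ t) :
    Nat.card {x : M // x ∈ t ∧ x ∉ s} = q ^ finrank K t - q ^ finrank K s := by
  have : Finite M := Module.finite_of_finite K
  change Nat.card ((t : Set M) \ s :) = _
  rw [Nat.card_coe_set_eq, Set.ncard_sdiff hst, ← Nat.card_coe_set_eq, ← Nat.card_coe_set_eq,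
    SetLike.coe_sort_coe, SetLike.coe_sort_coe, natCard_submodule_eq_pow, natCard_submodule_eq_pow]

lemma card_linearIndependent_span_eq {n : ℕ} {L : Submodule K M} (hL : finrank K L = n) :
    Nat.card {ω : Fin n → M // LinearIndependent K ω ∧ span K (Set.range ω) = L} =
      ∏ i : Fin n, (q ^ n - q ^ (i : ℕ)) := by
  have : Finite L := Module.finite_of_finite K
  subst hL
  rw [← card_linearIndependent le_rfl]
  refine Nat.card_congr
    { toFun := fun ω => ⟨fun i => ⟨ω.1 i, ω.2.2.le (subset_span (Set.mem_range_self i))⟩,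
        .of_comp L.subtype ω.2.1⟩
      invFun := fun s => ⟨L.subtype ∘ s.1, s.2.map' _ L.ker_subtype, ?_⟩
      left_inv := fun _ => rfl
      right_inv := fun _ => rfl }
  refine eq_of_le_of_finrank_eq ?_ ?_
  · rw [span_le, Set.range_comp]
    exact Set.image_subset_iff.mpr fun x _ => x.2
  · rw [finrank_span_eq_card (s.2.map' _ L.ker_subtype), Fintype.card_fin]

lemma card_linearIndependent_span_mem {n : ℕ} (S : Set (Submodule K M))
    (hS : ∀ L ∈ S, finrank K L = n) :
    Nat.card {ω : Fin n → M // LinearIndependent K ω ∧ span K (Set.range ω) ∈ S} =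
      Nat.card S * ∏ i : Fin n, (q ^ n - q ^ (i : ℕ)) := by
  have : Finite M := Module.finite_of_finite K
  have : Fintype S := Fintype.ofFinite S
  let e : {ω : Fin n → M // LinearIndependent K ω ∧ span K (Set.range ω) ∈ S} ≃
      Σ L : S, {ω : Fin n → M // LinearIndependent K ω ∧ span K (Set.range ω) = L} :=
    { toFun := fun ω => ⟨⟨_, ω.2.2⟩, ω.1, ω.2.1, rfl⟩
      invFun := fun p => ⟨p.2.1, p.2.2.1, by rw [p.2.2.2]; exact p.1.2⟩
      left_inv := fun _ => rfl
      right_inv := fun p => Sigma.subtype_ext (Subtype.ext p.2.2.2) rfl }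
  rw [Nat.card_congr e, Nat.card_sigma,
    Finset.sum_congr rfl fun L _ => card_linearIndependent_span_eq (hS L.1 L.2), Finset.sum_const,
    Finset.card_univ, smul_eq_mul, Nat.card_eq_fintype_card]

end Counting

namespace LinearMap.IsAlt

open Submodule

variable {K M : Type*} [Field K] [Fintype K] [AddCommGroup M] [Module K M] [FiniteDimensional K M]
  {B : M →ₗ[K] M →ₗ[K] K}

local notation "q" => Fintype.card K

lemma card_isotropic_partners (hB : B.IsAlt) {u : M} (hu : u ≠ 0) :
    Nat.card {v : M // LinearIndependent K ![u, v] ∧ B u v = 0} =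
      q ^ finrank K (ker (B u)) - q := by
  have h := card_mem_and_notMem_of_le
    ((span_singleton_le_iff_mem u (ker (B u))).mpr (mem_ker.mpr (hB.self_eq_zero u)))
  rw [finrank_span_singleton hu, pow_one] at h
  rw [← h]
  refine Nat.card_congr (Equiv.subtypeEquivRight fun v => ?_)
  rw [LinearIndependent.pair_iff' hu, mem_span_singleton, mem_ker, not_exists, and_comm]

theorem card_isotropic_pairs (hB : B.IsAlt) :
    Nat.card {ω : Fin 2 → M // LinearIndependent K ω ∧ B (ω 0) (ω 1) = 0} =
      (q ^ finrank K (ker B) - 1) * (q ^ finrank K M - q) +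
        (q ^ finrank K M - q ^ finrank K (ker B)) * (q ^ (finrank K M - 1) - q) := by
  classical
  have : Finite M := Module.finite_of_finite K
  have : Fintype M := Fintype.ofFinite M
  have hfiber (u : M) : Nat.card {v : M // LinearIndependent K ![u, v] ∧ B u v = 0} =
      (if u ∈ ker B ∧ u ∉ (⊥ : Submodule K M) then q ^ finrank K M - q else 0) +
        (if u ∈ (⊤ : Submodule K M) ∧ u ∉ ker B then q ^ (finrank K M - 1) - q else 0) := by
    by_cases hu : u = 0
    · have : IsEmpty {v : M // LinearIndependent K ![u, v] ∧ B u v = 0} :=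
        ⟨fun v => v.2.1.ne_zero 0 hu⟩
      rw [Nat.card_of_isEmpty]
      simp [hu]
    rw [hB.card_isotropic_partners hu]
    by_cases hBu : B u = 0
    · rw [if_pos ⟨mem_ker.mpr hBu, (mem_bot K).not.mpr hu⟩,
        if_neg fun h => h.2 (mem_ker.mpr hBu), add_zero, hBu, ker_zero, finrank_top]
    · rw [if_neg fun h => hBu (mem_ker.mp h.1), if_pos ⟨mem_top, fun h => hBu (mem_ker.mp h)⟩,
        zero_add, ← Module.Dual.finrank_ker_add_one_of_ne_zero hBu, Nat.add_sub_cancel]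
  let e : {ω : Fin 2 → M // LinearIndependent K ω ∧ B (ω 0) (ω 1) = 0} ≃
      Σ u : M, {v : M // LinearIndependent K ![u, v] ∧ B u v = 0} :=
    ((piFinTwoEquiv fun _ => M).subtypeEquiv fun ω => by
      rw [← FinVec.etaExpand_eq ω]; rfl).trans
      (Equiv.subtypeProdEquivSigmaSubtype fun u v => LinearIndependent K ![u, v] ∧ B u v = 0)
  rw [Nat.card_congr e, Nat.card_sigma, Finset.sum_congr rfl fun u _ => hfiber u,
    Finset.sum_add_distrib, Finset.sum_ite, Finset.sum_ite]
  simp only [Finset.sum_const, smul_eq_mul, mul_zero, add_zero]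
  rw [← Fintype.card_subtype, ← Fintype.card_subtype,
    ← Nat.card_eq_fintype_card (α := {u : M // u ∈ ker B ∧ u ∉ ⊥}),
    ← Nat.card_eq_fintype_card (α := {u : M // u ∈ ⊤ ∧ u ∉ ker B}),
    card_mem_and_notMem_of_le bot_le, card_mem_and_notMem_of_le le_top, finrank_bot, finrank_top,
    pow_zero]

end LinearMap.IsAlt

section Arithmetic

variable {q : ℕ}

lemma gaussBinom_two_mul (hq : 2 ≤ q) (m : ℕ) :
    gaussBinom q m 2 * (((q : ℚ) ^ 2 - 1) * ((q : ℚ) ^ 2 - q)) =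
      q * ((q : ℚ) ^ m - 1) * ((q : ℚ) ^ (m - 1) - 1) := by
  have hq1 : (1 : ℚ) < q := by exact_mod_cast hq
  have h1 : (q : ℚ) - 1 ≠ 0 := sub_ne_zero.mpr hq1.ne'
  have h2 : (q : ℚ) ^ 2 - 1 ≠ 0 := sub_ne_zero.mpr (one_lt_pow₀ hq1 two_ne_zero).ne'
  simp only [gaussBinom, Finset.prod_range_succ, Finset.prod_range_zero, one_mul, Nat.sub_zero,
    zero_add, pow_one]
  field_simp

lemma eG_two_mul (hq : 2 ≤ q) (n : ℕ) :
    eG q 2 (n + 4) * (((q : ℚ) ^ 2 - 1) * ((q : ℚ) ^ 2 - q)) =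
      ((q : ℚ) ^ (n + 2) - 1) * ((q : ℚ) ^ (n + 4) - q) +
        ((q : ℚ) ^ (n + 4) - (q : ℚ) ^ (n + 2)) * ((q : ℚ) ^ (n + 3) - q) := by
  rw [eG, sub_mul, gaussBinom_two_mul hq, show n + 4 - 1 = n + 3 by omega,
    show 2 * (n + 4 - 2) = 2 * n + 4 by omega]
  ring

lemma eG'_two_mul (hq : 2 ≤ q) (n : ℕ) :
    eG' q 2 (n + 4) * (((q : ℚ) ^ 2 - 1) * ((q : ℚ) ^ 2 - q)) =
      ((q : ℚ) ^ n - 1) * ((q : ℚ) ^ (n + 4) - q) +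
        ((q : ℚ) ^ (n + 4) - (q : ℚ) ^ n) * ((q : ℚ) ^ (n + 3) - q) := by
  rw [eG', sub_mul, sub_mul, gaussBinom_two_mul hq, show n + 4 - 1 = n + 3 by omega,
    show 2 * (n + 4 - 2) = 2 * n + 4 by omega, show 2 * n + 4 - 2 = 2 * n + 2 by omega]
  ring

theorem le_eG'_of_mul_eq {n k N : ℕ} (hq : 2 ≤ q) (hk : k < n + 4) (hpar : Even (n + 4 - k))
    (hN : N * ((q ^ 2 - 1) * (q ^ 2 - q)) =
      (q ^ k - 1) * (q ^ (n + 4) - q) + (q ^ (n + 4) - q ^ k) * (q ^ (n + 4 - 1) - q))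
    (hlt : (N : ℚ) < eG q 2 (n + 4)) : (N : ℚ) ≤ eG' q 2 (n + 4) := by
  have hq1 : (1 : ℚ) < q := by exact_mod_cast hq
  have hD : 0 < ((q : ℚ) ^ 2 - 1) * ((q : ℚ) ^ 2 - q) := by
    apply mul_pos <;> nlinarith
  have hone (a : ℕ) : 1 ≤ q ^ a := Nat.one_le_pow _ _ (by omega)
  have hself {a : ℕ} (ha : a ≠ 0) : q ≤ q ^ a := Nat.le_self_pow ha q
  rw [show n + 4 - 1 = n + 3 by omega] at hN
  qify [hone 2, hone k, hself two_ne_zero, hself (n + 3).succ_ne_zero,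
    hself (n + 2).succ_ne_zero, Nat.pow_le_pow_right (by omega : q > 0) hk.le] at hN
  obtain rfl | hkn : k = n + 2 ∨ k ≤ n := by
    obtain ⟨t, ht⟩ := hpar
    omega
  · rw [← eG_two_mul hq] at hN
    exact absurd (mul_right_cancel₀ hD.ne' hN) hlt.ne
  · refine le_of_mul_le_mul_right ?_ hD
    rw [hN, eG'_two_mul hq]
    have hqk : (q : ℚ) ^ k ≤ (q : ℚ) ^ n := pow_le_pow_right₀ hq1.le hkn
    have hq34 : (q : ℚ) ^ (n + 3) ≤ (q : ℚ) ^ (n + 4) := pow_le_pow_right₀ hq1.le (by omega)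
    nlinarith [mul_nonneg (sub_nonneg.mpr hqk) (sub_nonneg.mpr hq34)]

end Arithmetic

section Hyperplane

open Submodule

variable {K M : Type*} [Field K] [AddCommGroup M] [Module K M]

lemma apply_wedge_two (φ : ⋀[K]^2 M →ₗ[K] K) (ω : Fin 2 → M) :
    φ (wedge K M 2 ω) = wedgeForm φ (ω 0) (ω 1) :=
  ((φ.compAlternatingMap (exteriorPower.ιMulti K 2)).toLinearMap₂_apply_fin_two ω).symm

lemma liesOn_span_iff (φ : ⋀[K]^2 M →ₗ[K] K) {ω : Fin 2 → M}
    (hω : LinearIndependent K ω) :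
    LiesOn K M 2 φ (span K (Set.range ω)) ↔ φ (wedge K M 2 ω) = 0 := by
  refine ⟨fun ⟨ω', _, _, hspan, h⟩ => ?_,
    fun h => ⟨ω, fun i => subset_span (Set.mem_range_self i), hω, rfl, h⟩⟩
  rw [apply_wedge_two] at h ⊢
  have hmem (i : Fin 2) : ω i ∈ span K (Set.range ω') :=
    hspan ▸ subset_span (Set.mem_range_self i)
  exact (isAlt_wedgeForm φ).apply_eq_zero_of_mem_span h (hmem 0) (hmem 1)

variable [Fintype K] [FiniteDimensional K M]

local notation "q" => Fintype.card K

theorem card_liesOn_mul (φ : ⋀[K]^2 M →ₗ[K] K) :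
    Nat.card {L : Submodule K M | finrank K L = 2 ∧ LiesOn K M 2 φ L} *
        ((q ^ 2 - 1) * (q ^ 2 - q)) =
      Nat.card {ω : Fin 2 → M // LinearIndependent K ω ∧ wedgeForm φ (ω 0) (ω 1) = 0} := by
  have h := card_linearIndependent_span_mem
    {L : Submodule K M | finrank K L = 2 ∧ LiesOn K M 2 φ L} fun L hL => hL.1
  rw [Fin.prod_univ_two] at h
  simp only [Fin.val_zero, Fin.val_one, pow_zero, pow_one] at h
  rw [← h]
  refine Nat.card_congr (Equiv.subtypeEquivRight fun ω => and_congr_right fun hω => ?_)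
  rw [Set.mem_ofPred_eq, finrank_span_eq_card hω, Fintype.card_fin, liesOn_span_iff φ hω,
    apply_wedge_two, eq_self, true_and]

end Hyperplane

/-- **Second minimum weight for `ℓ = 2`.** If `m ≥ 4` and `Π` is a hyperplane of the Plücker
projective space `P(⋀^2 V)` with `|Π ∩ G(2,V)| < e(2,m)`, then
`|Π ∩ G(2,V)| ≤ e'(2,m) = [m 2]_q − q^{2(m−2)} − q^{2(m−2)−2}`. -/
theorem stmt4 (F : Type*) [Field F] [Fintype F] (V : Type*) [AddCommGroup V] [Module F V]
    [FiniteDimensional F V] (q m : ℕ) (hq : Fintype.card F = q)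
    (hV : finrank F V = m) (hm : 4 ≤ m)
    (φ : ⋀[F]^2 V →ₗ[F] F) (hφ : φ ≠ 0)
    (hlt : (Nat.card {L : Submodule F V | finrank F L = 2 ∧ LiesOn F V 2 φ L} : ℚ) <
      eG q 2 m) :
    (Nat.card {L : Submodule F V | finrank F L = 2 ∧ LiesOn F V 2 φ L} : ℚ) ≤
      eG' q 2 m := by
  subst hq
  obtain ⟨n, rfl⟩ : ∃ n, m = n + 4 := ⟨m - 4, by omega⟩
  have hB := isAlt_wedgeForm φ
  have hker : finrank F (LinearMap.ker (wedgeForm φ)) < n + 4 :=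
    hV ▸ Submodule.finrank_lt (LinearMap.ker_eq_top.not.mpr (wedgeForm_ne_zero hφ))
  have hcount := (card_liesOn_mul φ).trans hB.card_isotropic_pairs
  rw [hV] at hcount
  exact le_eG'_of_mul_eq Fintype.one_lt_card hker (hV ▸ hB.even_finrank_sub_finrank_ker)
    hcount hlt
end

section
/- Let 1 ≤ ℓ ≤ m−1 and let Π be a hyperplane of the Plücker projective space P(⋀^ℓ V). Let a be the maximum over all (m−1)-dimensional subspaces W of V of |{L ∈ G(ℓ,W) : L lies on Π}|. Then (q^{m−ℓ} − 1)·|Π ∩ G(ℓ,V)| ≤ (q^m − 1)·a. Furthermore, if |{L ∈ G(ℓ,W) : L lies on Π}| = a for every (m−1)-dimensional subspace W of V, then (q^{m−ℓ} − 1)·|Π ∩ G(ℓ,V)| = (q^m − 1)·a. -/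
open Module

variable (F : Type*) [Field F] (V : Type*) [AddCommGroup V] [Module F V]

/-! Double count the pairs `(L, f)` with `L` an `ℓ`-subspace on `Π` and `f` a nonzero linear
functional on `V` vanishing on `L`. Each `L` lies in the kernel of exactly `q^{m-ℓ} - 1` such
`f` (the nonzero elements of its annihilator), while each of the `q^m - 1` nonzero `f` has as
kernel a hyperplane, which contains at most `a` of the `L`. -/

namespace Set

variable {α β : Type*} [Finite α] [Finite β] (r : α → β → Prop) {s : Set α} {t : Set β}
  {m n : ℕ}

theorem natCard_mul_le_natCard_mul (hm : ∀ a ∈ s, m ≤ Nat.card {b | b ∈ t ∧ r a b})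
    (hn : ∀ b ∈ t, Nat.card {a | a ∈ s ∧ r a b} ≤ n) : Nat.card s * m ≤ Nat.card t * n := by
  classical
  have := Fintype.ofFinite α
  have := Fintype.ofFinite β
  simp only [Nat.card_eq_card_toFinset] at hm hn ⊢
  refine Finset.card_mul_le_card_mul r (fun a ha => ?_) (fun b hb => ?_)
  · convert hm a (by simpa using ha) using 2
    ext
    simp [Finset.bipartiteAbove]
  · convert hn b (by simpa using hb) using 2
    ext
    simp [Finset.bipartiteBelow]

theorem natCard_mul_eq_natCard_mul (hm : ∀ a ∈ s, Nat.card {b | b ∈ t ∧ r a b} = m)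
    (hn : ∀ b ∈ t, Nat.card {a | a ∈ s ∧ r a b} = n) : Nat.card s * m = Nat.card t * n :=
  (natCard_mul_le_natCard_mul r (fun a ha => (hm a ha).ge) fun b hb => (hn b hb).le).antisymm
    (natCard_mul_le_natCard_mul (Function.swap r) (fun b hb => (hn b hb).ge)
      fun a ha => (hm a ha).le)

end Set

namespace Submodule

variable {K U : Type*} [Field K] [AddCommGroup U] [Module K U]

theorem setOf_mem_setOf_finrank_eq_and_le (P : Submodule K U → Prop) (l : ℕ)
    (W : Submodule K U) :
    {L | L ∈ {L : Submodule K U | finrank K L = l ∧ P L} ∧ L ≤ W} =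
      {L : Submodule K U | finrank K L = l ∧ L ≤ W ∧ P L} := by
  ext
  simp only [Set.mem_ofPred_eq]
  tauto

variable [FiniteDimensional K U]

theorem natCard_ne_zero_le_ker (W : Submodule K U) :
    Nat.card {f : Dual K U | f ≠ 0 ∧ W ≤ LinearMap.ker f} =
      Nat.card K ^ (finrank K U - finrank K W) - 1 := by
  have hset : {f : Dual K U | f ≠ 0 ∧ W ≤ LinearMap.ker f} =
      (W.dualAnnihilator : Set (Dual K U)) \ {0} := by
    ext f
    simp [and_comm, mem_dualAnnihilator, SetLike.le_def]
  have hdim := Subspace.finrank_add_finrank_dualAnnihilator_eq W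
  rw [hset, Nat.card_coe_set_eq, Set.ncard_sdiff_singleton_of_mem (zero_mem _),
    ← Nat.card_coe_set_eq, SetLike.coe_sort_coe, natCard_eq_pow_finrank (K := K)]
  congr
  omega

theorem natCard_dual_ne_zero :
    Nat.card {f : Dual K U | f ≠ 0} = Nat.card K ^ finrank K U - 1 := by
  simpa using natCard_ne_zero_le_ker (⊥ : Submodule K U)

variable [Finite K] (P : Submodule K U → Prop) (l a : ℕ)

theorem pow_sub_one_mul_natCard_le
    (h : ∀ W : Submodule K U, finrank K W = finrank K U - 1 →
      Nat.card {L : Submodule K U | finrank K L = l ∧ L ≤ W ∧ P L} ≤ a) :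
    (Nat.card K ^ (finrank K U - l) - 1) * Nat.card {L : Submodule K U | finrank K L = l ∧ P L}
      ≤ (Nat.card K ^ finrank K U - 1) * a := by
  have : Finite U := Module.finite_of_finite K
  have : Finite (Dual K U) := Module.finite_of_finite K
  rw [mul_comm, ← natCard_dual_ne_zero]
  refine Set.natCard_mul_le_natCard_mul (fun L f => L ≤ LinearMap.ker f)
    (fun L hL => (hL.1 ▸ natCard_ne_zero_le_ker L).ge) fun f hf => ?_
  rw [setOf_mem_setOf_finrank_eq_and_le]
  exact h _ (by have := Module.Dual.finrank_ker_add_one_of_ne_zero hf; omega)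

theorem pow_sub_one_mul_natCard_eq
    (h : ∀ W : Submodule K U, finrank K W = finrank K U - 1 →
      Nat.card {L : Submodule K U | finrank K L = l ∧ L ≤ W ∧ P L} = a) :
    (Nat.card K ^ (finrank K U - l) - 1) * Nat.card {L : Submodule K U | finrank K L = l ∧ P L}
      = (Nat.card K ^ finrank K U - 1) * a := by
  have : Finite U := Module.finite_of_finite K
  have : Finite (Dual K U) := Module.finite_of_finite K
  rw [mul_comm, ← natCard_dual_ne_zero]
  refine Set.natCard_mul_eq_natCard_mul (fun L f => L ≤ LinearMap.ker f)
    (fun L hL => hL.1 ▸ natCard_ne_zero_le_ker L) fun f hf => ?_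
  rw [setOf_mem_setOf_finrank_eq_and_le]
  exact h _ (by have := Module.Dual.finrank_ker_add_one_of_ne_zero hf; omega)

end Submodule

theorem stmt5_general (F : Type*) [Field F] [Fintype F] (V : Type*) [AddCommGroup V] [Module F V]
    [FiniteDimensional F V] (q m l : ℕ) (hq : Fintype.card F = q)
    (hV : finrank F V = m)
    (φ : ⋀[F]^l V →ₗ[F] F) (a : ℕ)
    (hub : ∀ W : Submodule F V, finrank F W = m - 1 →
      Nat.card {L : Submodule F V | finrank F L = l ∧ L ≤ W ∧ LiesOn F V l φ L} ≤ a) :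
    (q ^ (m - l) - 1) * Nat.card {L : Submodule F V | finrank F L = l ∧ LiesOn F V l φ L} ≤
        (q ^ m - 1) * a ∧
      ((∀ W : Submodule F V, finrank F W = m - 1 →
          Nat.card {L : Submodule F V | finrank F L = l ∧ L ≤ W ∧ LiesOn F V l φ L} = a) →
        (q ^ (m - l) - 1) *
            Nat.card {L : Submodule F V | finrank F L = l ∧ LiesOn F V l φ L} =
          (q ^ m - 1) * a) := by
  subst hq hV
  rw [Fintype.card_eq_nat_card]
  exact ⟨Submodule.pow_sub_one_mul_natCard_le _ l a hub,
    Submodule.pow_sub_one_mul_natCard_eq _ l a⟩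

/-- **Zanella-type counting lemma.** Let `1 ≤ ℓ ≤ m−1` and let `Π` be a hyperplane of the
Plücker projective space `P(⋀^ℓ V)`. If `a` is the maximum over all `(m−1)`-dimensional
subspaces `W` of `V` of `|{L ∈ G(ℓ,W) : L lies on Π}|`, then
`(q^{m−ℓ} − 1)·|Π ∩ G(ℓ,V)| ≤ (q^m − 1)·a`, with equality if the maximum is attained at
every `W`. -/
theorem stmt5 (F : Type*) [Field F] [Fintype F] (V : Type*) [AddCommGroup V] [Module F V]
    [FiniteDimensional F V] (q m l : ℕ) (hq : Fintype.card F = q)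
    (hV : finrank F V = m) (hl : 1 ≤ l) (hlm : l ≤ m - 1)
    (φ : ⋀[F]^l V →ₗ[F] F) (hφ : φ ≠ 0) (a : ℕ)
    (hub : ∀ W : Submodule F V, finrank F W = m - 1 →
      Nat.card {L : Submodule F V | finrank F L = l ∧ L ≤ W ∧ LiesOn F V l φ L} ≤ a)
    (hattain : ∃ W : Submodule F V, finrank F W = m - 1 ∧
      Nat.card {L : Submodule F V | finrank F L = l ∧ L ≤ W ∧ LiesOn F V l φ L} = a) :
    (q ^ (m - l) - 1) * Nat.card {L : Submodule F V | finrank F L = l ∧ LiesOn F V l φ L} ≤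
        (q ^ m - 1) * a ∧
      ((∀ W : Submodule F V, finrank F W = m - 1 →
          Nat.card {L : Submodule F V | finrank F L = l ∧ L ≤ W ∧ LiesOn F V l φ L} = a) →
        (q ^ (m - l) - 1) *
            Nat.card {L : Submodule F V | finrank F L = l ∧ LiesOn F V l φ L} =
          (q ^ m - 1) * a) :=
  stmt5_general F V q m l hq hV φ a hub
end

section
/- Let q be a prime power and let ℓ, m be integers with 1 ≤ ℓ ≤ m−1. Then e(ℓ,m−1)·(q^m − 1) < e(ℓ,m)·(q^{m−ℓ} − 1). -/
open Module

variable (F : Type*) [Field F] (V : Type*) [AddCommGroup V] [Module F V]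

/-- If `q` is a prime power and `1 ≤ ℓ ≤ m−1`, then
`e(ℓ,m−1)·(q^m − 1) < e(ℓ,m)·(q^{m−ℓ} − 1)`. -/
theorem stmt6 (q l m : ℕ) (hq : IsPrimePow q) (hl : 1 ≤ l) (hlm : l ≤ m - 1) :
    eG q l (m - 1) * ((q : ℚ) ^ m - 1) < eG q l m * ((q : ℚ) ^ (m - l) - 1) := by
  have hq2 : 2 ≤ q := hq.two_le
  have hm : l + 1 ≤ m := by omega
  have hQ : (2 : ℚ) ≤ (q : ℚ) := by exact_mod_cast hq2
  have hQ0 : (0 : ℚ) < (q : ℚ) := by linarith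
  set f : ℕ → ℚ := fun i => (q : ℚ) ^ (m - i) - 1 with hf
  have hkeyprod : (∏ i ∈ Finset.range l, f (i + 1)) * f 0
      = (∏ i ∈ Finset.range l, f i) * f l := by
    rw [← Finset.prod_range_succ', Finset.prod_range_succ]
  have hprod : gaussBinom q (m - 1) l * ((q : ℚ) ^ m - 1)
      = gaussBinom q m l * ((q : ℚ) ^ (m - l) - 1) := by
    unfold gaussBinom
    have h1 : ∀ i ∈ Finset.range l,
        ((q : ℚ) ^ (m - 1 - i) - 1) / ((q : ℚ) ^ (i + 1) - 1)
        = f (i + 1) / ((q : ℚ) ^ (i + 1) - 1) := by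
      intro i hi
      have : m - 1 - i = m - (i + 1) := by omega
      rw [this, hf]
    rw [Finset.prod_congr rfl h1]
    rw [Finset.prod_div_distrib, Finset.prod_div_distrib]
    rw [div_mul_eq_mul_div, div_mul_eq_mul_div]
    have h0 : f 0 = (q : ℚ) ^ m - 1 := by simp [hf]
    have hl' : f l = (q : ℚ) ^ (m - l) - 1 := by simp [hf]
    have : (∏ i ∈ Finset.range l, f (i + 1)) * ((q : ℚ) ^ m - 1)
        = (∏ i ∈ Finset.range l, f i) * ((q : ℚ) ^ (m - l) - 1) := by
      rw [← h0, ← hl']; exact hkeyprod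
    rw [this]
  have hexp : l * (m - l) = l * (m - 1 - l) + l := by
    have h2 : m - l = (m - 1 - l) + 1 := by omega
    rw [h2, Nat.mul_succ]
  have hpl : (1 : ℚ) < (q : ℚ) ^ l := by
    calc (1:ℚ) < 2 := one_lt_two
    _ ≤ (q:ℚ) := hQ
    _ = (q:ℚ)^1 := (pow_one _).symm
    _ ≤ (q:ℚ)^l := pow_le_pow_right₀ (by linarith) hl
  have hpm : (q : ℚ) ^ l * (q : ℚ) ^ (m - l) = (q : ℚ) ^ m := by
    rw [← pow_add]
    congr 1
    omega
  have hP0 : (0 : ℚ) < (q : ℚ) ^ (l * (m - 1 - l)) := pow_pos hQ0 _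
  have hkey : (q : ℚ) ^ (l * (m - l)) * ((q : ℚ) ^ (m - l) - 1)
      < (q : ℚ) ^ (l * (m - 1 - l)) * ((q : ℚ) ^ m - 1) := by
    rw [hexp, pow_add, mul_assoc]
    apply mul_lt_mul_of_pos_left _ hP0
    have : (q : ℚ) ^ l * ((q : ℚ) ^ (m - l) - 1) = (q : ℚ) ^ m - (q : ℚ) ^ l := by
      rw [mul_sub, hpm, mul_one]
    rw [this]
    linarith
  unfold eG
  rw [sub_mul, sub_mul]
  linarith
end

section
/- Let q be a prime power and let ℓ, m be integers with 2 ≤ ℓ ≤ m−2. Then e'(ℓ,m−1)·(q^m − 1) < e'(ℓ,m)·(q^{m−ℓ} − 1). -/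
open Module

variable (F : Type*) [Field F] (V : Type*) [AddCommGroup V] [Module F V]

lemma gauss_step (q l m : ℕ) :
    gaussBinom q (m - 1) l * ((q : ℚ) ^ m - 1) = gaussBinom q m l * ((q : ℚ) ^ (m - l) - 1) := by
  unfold gaussBinom
  rw [Finset.prod_div_distrib, Finset.prod_div_distrib, div_mul_eq_mul_div, div_mul_eq_mul_div]
  congr 1
  have h1 : ∀ i ∈ Finset.range l, ((q : ℚ) ^ (m - 1 - i) - 1) = ((q : ℚ) ^ (m - (i + 1)) - 1) := by
    intro i _
    congr 2
    omega
  rw [Finset.prod_congr rfl h1]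
  have h2 := Finset.prod_range_succ' (fun i => ((q : ℚ) ^ (m - i) - 1)) l
  have h3 := Finset.prod_range_succ (fun i => ((q : ℚ) ^ (m - i) - 1)) l
  simp only [Nat.sub_zero] at h2 h3
  rw [← h2, h3]

lemma key_ineq (Q A S T : ℚ) (hQ : 2 ≤ Q) (hA : 1 ≤ A) (hS : 1 ≤ S) (hT : 1 ≤ T) :
    (A * S * Q ^ 4 + A * S * Q ^ 2) * (T * Q ^ 2 - 1) <
      (A * Q ^ 2 + A) * (S * T * Q ^ 4 - 1) := by
  have hA0 : (0 : ℚ) < A := by linarith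
  have hQ2 : (4 : ℚ) ≤ Q ^ 2 := by nlinarith
  have hQ4 : Q ^ 2 * Q ^ 2 = Q ^ 4 := by ring
  have h1 : (0 : ℚ) < S * Q ^ 4 - Q ^ 2 := by
    have := mul_le_mul_of_nonneg_right hS (by positivity : (0 : ℚ) ≤ Q ^ 4)
    nlinarith
  have h2 : (0 : ℚ) < S * Q ^ 2 - 1 := by
    have := mul_le_mul_of_nonneg_right hS (by positivity : (0 : ℚ) ≤ Q ^ 2)
    nlinarith
  have ha := mul_pos hA0 h1
  have hb := mul_pos hA0 h2
  nlinarith [ha, hb]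

/-- If `q` is a prime power and `2 ≤ ℓ ≤ m−2`, then
`e'(ℓ,m−1)·(q^m − 1) < e'(ℓ,m)·(q^{m−ℓ} − 1)`. -/
theorem stmt8 (q l m : ℕ) (hq : IsPrimePow q) (hl : 2 ≤ l) (hlm : l ≤ m - 2) :
    eG' q l (m - 1) * ((q : ℚ) ^ m - 1) < eG' q l m * ((q : ℚ) ^ (m - l) - 1) := by
  have hq2 : 2 ≤ q := hq.two_le
  have hQ : (2 : ℚ) ≤ (q : ℚ) := by exact_mod_cast hq2
  have hQ1 : (1 : ℚ) ≤ (q : ℚ) := by linarith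
  obtain ⟨s, rfl⟩ := Nat.exists_eq_add_of_le hl
  obtain ⟨t, rfl⟩ : ∃ t, m = 2 + s + 2 + t := ⟨m - (2 + s) - 2, by omega⟩
  unfold eG'
  have e1 : (2 + s) * ((2 + s + 2 + t - 1) - (2 + s)) = s * t + s + t + t + 2 := by
    have h : (2 + s + 2 + t - 1) - (2 + s) = t + 1 := by omega
    rw [h]; ring
  have e2 : (2 + s) * ((2 + s + 2 + t) - (2 + s)) = s * t + s + t + t + 2 + s + 2 := by
    have h : (2 + s + 2 + t) - (2 + s) = t + 2 := by omega
    rw [h]; ring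
  have aux : ∀ u : ℕ, u + 2 - 2 = u := fun u => by omega
  have e3 : (2 + s) * ((2 + s + 2 + t - 1) - (2 + s)) - 2 = s * t + s + t + t := by
    rw [e1]; exact aux _
  have e4 : (2 + s) * ((2 + s + 2 + t) - (2 + s)) - 2 = s * t + s + t + t + s + 2 := by
    rw [e2]
    have h : s * t + s + t + t + 2 + s + 2 = (s * t + s + t + t + s + 2) + 2 := by ring
    rw [h]; exact aux _
  have e5 : (2 + s + 2 + t) - (2 + s) = t + 2 := by omega
  rw [e3, e4, e1, e2, e5, sub_mul, sub_mul, sub_mul, sub_mul, gauss_step, e5]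
  have hP : (1 : ℚ) ≤ (q : ℚ) ^ (s * t) := one_le_pow₀ hQ1
  have hS : (1 : ℚ) ≤ (q : ℚ) ^ s := one_le_pow₀ hQ1
  have hT : (1 : ℚ) ≤ (q : ℚ) ^ t := one_le_pow₀ hQ1
  have hA : (1 : ℚ) ≤ (q : ℚ) ^ (s * t) * (q : ℚ) ^ s * (q : ℚ) ^ t * (q : ℚ) ^ t := by
    have := one_le_pow₀ (n := s * t + s + t + t) hQ1
    rwa [pow_add, pow_add, pow_add] at this
  have key := key_ineq (q : ℚ) ((q : ℚ) ^ (s * t) * (q : ℚ) ^ s * (q : ℚ) ^ t * (q : ℚ) ^ t)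
    ((q : ℚ) ^ s) ((q : ℚ) ^ t) hQ hA hS hT
  simp only [pow_add]
  nlinarith [key]
end

section
/- Let 1 ≤ ℓ ≤ m−1, let W be an (m−1)-dimensional subspace of V, and let Π be a hyperplane of the Plücker projective space P(⋀^ℓ V) such that not every ℓ-dimensional subspace of W lies on Π. Then |{L ∈ G(ℓ,W) : L lies on Π}| ≤ [m−1 ℓ]_q − q^{ℓ(m−1−ℓ)}. -/
open Module

variable (F : Type*) [Field F] (V : Type*) [AddCommGroup V] [Module F V]

/-!
Let `n = m - 1` and let `g` be the alternating `ℓ`-form `g(w₁, …, w_ℓ) = φ(w₁ ∧ ⋯ ∧ w_ℓ)` on `W`;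
it is nonzero because some `ℓ`-subspace of `W` is off `Π`. An `ℓ`-subspace of `W` lies on `Π`
exactly when `g` vanishes on it, and a tuple with `g ≠ 0` is a basis of a subspace on which `g`
does not vanish, so it suffices to count such tuples. Choosing them coordinate by coordinate, the
first one may be any vector outside the kernel of `x ↦ g(x, -)`, a subspace of codimension at least
`ℓ`; this gives at least `∏ᵢ (qⁿ - q^(n-i-1)) = q^(ℓ(n-ℓ)) |GL_ℓ(F)|` tuples, hence at least
`q^(ℓ(n-ℓ))` subspaces of `W` off `Π` among the `[n ℓ]_q` subspaces of dimension `ℓ`.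
-/

open Submodule Finset

theorem gaussBinom_mul_prod {q : ℕ} (hq : 1 < q) {n l : ℕ} (hl : l ≤ n) :
    gaussBinom q n l * ∏ i ∈ range l, ((q : ℚ) ^ l - q ^ i) =
      ∏ i ∈ range l, ((q : ℚ) ^ n - q ^ i) := by
  induction l with
  | zero => simp [gaussBinom]
  | succ l ih =>
    have hden : (q : ℚ) ^ (l + 1) - 1 ≠ 0 :=
      (sub_pos.2 (one_lt_pow₀ (by exact_mod_cast hq) l.succ_ne_zero)).ne'
    have hlast : (q : ℚ) ^ n - q ^ l = q ^ l * (q ^ (n - l) - 1) := by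
      rw [mul_sub, ← pow_add, Nat.add_sub_cancel' (by omega), mul_one]
    have hshift : ∏ i ∈ range (l + 1), ((q : ℚ) ^ (l + 1) - q ^ i) =
        (q ^ (l + 1) - 1) * (q ^ l * ∏ i ∈ range l, ((q : ℚ) ^ l - q ^ i)) := by
      rw [prod_range_succ', pow_zero, mul_comm]
      congr 1
      simp_rw [pow_succ', ← mul_sub, prod_mul_distrib, prod_const, card_range]
    rw [gaussBinom, prod_range_succ, ← gaussBinom, hshift, prod_range_succ, ← ih (by omega),
      hlast]
    field_simp

theorem prod_range_pow_sub_pow_sub (q : ℕ) {n l : ℕ} (hl : l ≤ n) :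
    ∏ i ∈ range l, (q ^ n - q ^ (n - (i + 1))) =
      q ^ (l * (n - l)) * ∏ i ∈ range l, (q ^ l - q ^ i) := by
  have hconst := pow_card_mul_prod (s := range l) (b := q ^ (n - l))
    (f := fun i => q ^ l - q ^ (l - 1 - i))
  rw [card_range] at hconst
  rw [← prod_range_reflect (q ^ l - q ^ ·), mul_comm l, pow_mul, hconst]
  refine prod_congr rfl fun i hi => ?_
  have := mem_range.1 hi
  rw [Nat.mul_sub, ← pow_add, ← pow_add]
  congr 2 <;> omega

theorem cast_prod_range_pow_sub_pow {q : ℕ} (hq : 0 < q) {a l : ℕ} (hl : l ≤ a) :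
    ((∏ i ∈ range l, (q ^ a - q ^ i) : ℕ) : ℚ) = ∏ i ∈ range l, ((q : ℚ) ^ a - q ^ i) := by
  push_cast
  refine prod_congr rfl fun i hi => ?_
  rw [Nat.cast_sub (Nat.pow_le_pow_right hq (by grind)), Nat.cast_pow, Nat.cast_pow]

theorem Nat.card_subtype_and_add_card_subtype_and_not {α : Type*} [Finite α] (p r : α → Prop) :
    Nat.card {x // p x ∧ r x} + Nat.card {x // p x ∧ ¬ r x} = Nat.card {x // p x} := by
  classical
  rw [← Nat.card_sum]
  exact Nat.card_congr <| ((Equiv.subtypeSubtypeEquivSubtypeInter p r).symm.sumCongr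
    (Equiv.subtypeSubtypeEquivSubtypeInter p (¬ r ·)).symm).trans (Equiv.sumCompl _)

section Grassmannian

variable {F U : Type*} [Field F] [AddCommGroup U] [Module F U]

theorem span_range_subtype_comp [FiniteDimensional F U] {M : Submodule F U} {l : ℕ}
    {w : Fin l → M} (hw : LinearIndependent F w) (hM : finrank F M = l) :
    span F (Set.range (M.subtype ∘ w)) = M := by
  rw [Set.range_comp, span_image, hw.span_eq_top_of_card_eq_finrank' (by simpa using hM.symm),
    map_subtype_top]

variable [Fintype F] [Finite U]

local notation "q" => Fintype.card F
local notation "n" => finrank F U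

/-- Every linearly independent `l`-tuple is a basis of exactly one `l`-dimensional subspace, and
each such subspace has `|GL_l(F)|` ordered bases. -/
theorem card_linearIndependent_span (l : ℕ) (Q : Submodule F U → Prop) :
    Nat.card {v : Fin l → U // LinearIndependent F v ∧ Q (span F (Set.range v))} =
      Nat.card {M : Submodule F U // finrank F M = l ∧ Q M} *
        ∏ i ∈ range l, (q ^ l - q ^ i) := by
  let Φ : (Σ M : {M : Submodule F U // finrank F M = l ∧ Q M},
      {w : Fin l → M.1 // LinearIndependent F w}) →
      {v : Fin l → U // LinearIndependent F v ∧ Q (span F (Set.range v))} := fun ⟨M, w⟩ =>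
    ⟨M.1.subtype ∘ w.1, w.2.map' _ M.1.ker_subtype, by
      rw [span_range_subtype_comp w.2 M.2.1]; exact M.2.2⟩
  have hΦ : Function.Bijective Φ := by
    constructor
    · rintro ⟨M, w⟩ ⟨M', w'⟩ h
      have hv : M.1.subtype ∘ w.1 = M'.1.subtype ∘ w'.1 := congrArg Subtype.val h
      obtain rfl : M = M' := Subtype.ext <| by
        rw [← span_range_subtype_comp w.2 M.2.1, ← span_range_subtype_comp w'.2 M'.2.1, hv]
      exact Sigma.ext rfl (heq_of_eq (Subtype.ext (funext fun i => Subtype.ext (congrFun hv i))))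
    · rintro ⟨v, hv, hQ⟩
      exact ⟨⟨⟨span F (Set.range v), by rw [finrank_span_eq_card hv, Fintype.card_fin], hQ⟩,
        ⟨fun i => ⟨v i, subset_span (Set.mem_range_self i)⟩, hv.of_comp (span F _).subtype⟩⟩,
        rfl⟩
  have hbases (M : {M : Submodule F U // finrank F M = l ∧ Q M}) :
      Nat.card {w : Fin l → M.1 // LinearIndependent F w} = ∏ i ∈ range l, (q ^ l - q ^ i) := by
    rw [card_linearIndependent M.2.1.ge, M.2.1, Fin.prod_univ_eq_prod_range (q ^ l - q ^ ·)]
  have := Fintype.ofFinite {M : Submodule F U // finrank F M = l ∧ Q M}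
  rw [← Nat.card_congr (Equiv.ofBijective Φ hΦ), Nat.card_sigma,
    sum_congr rfl fun M _ => hbases M, sum_const, card_univ, smul_eq_mul, Nat.card_eq_fintype_card]

theorem card_grassmannian_eq_gaussBinom {l : ℕ} (hl : l ≤ n) :
    (Nat.card {M : Submodule F U // finrank F M = l} : ℚ) = gaussBinom q n l := by
  have hcount := card_linearIndependent_span (F := F) (U := U) l fun _ => True
  simp only [and_true] at hcount
  rw [card_linearIndependent hl, Fin.prod_univ_eq_prod_range (q ^ n - q ^ ·)] at hcount
  have hcast := congrArg (Nat.cast : ℕ → ℚ) hcount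
  rw [Nat.cast_mul, cast_prod_range_pow_sub_pow Fintype.card_pos hl,
    cast_prod_range_pow_sub_pow Fintype.card_pos le_rfl,
    ← gaussBinom_mul_prod Fintype.one_lt_card hl] at hcast
  refine (mul_left_injective₀ ?_ hcast).symm
  exact prod_ne_zero_iff.2 fun i hi => sub_ne_zero.2
    (pow_lt_pow_right₀ (by exact_mod_cast Fintype.one_lt_card) (mem_range.1 hi)).ne'

end Grassmannian

namespace AlternatingMap

section CommRing

variable {R M N : Type*} [CommRing R] [AddCommGroup M] [Module R M] [AddCommGroup N] [Module R N]

theorem compLinearMap_span_subtype_eq_zero_iff {ι : Type*} [Finite ι] {f : M [⋀^ι]→ₗ[R] R}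
    {v : ι → M} (hv : LinearIndependent R v) :
    f.compLinearMap (span R (Set.range v)).subtype = 0 ↔ f v = 0 := by
  rw [← map_basis_eq_zero_iff (Basis.span hv)]
  simp [Basis.span_apply]

theorem apply_eq_zero_of_mem_ker_curryLeft {l : ℕ} (f : M [⋀^Fin (l + 1)]→ₗ[R] N) {x : M}
    (hx : x ∈ LinearMap.ker f.curryLeft) {w : Fin (l + 1) → M} {j : Fin (l + 1)}
    (hw : w j = x) : f w = 0 := by
  have hswap : f (w ∘ Equiv.swap 0 j) = 0 := by
    rw [← Matrix.cons_head_tail (w ∘ Equiv.swap 0 j), ← curryLeft_apply_apply]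
    simp_all [Matrix.vecHead]
  rwa [f.map_perm, smul_eq_zero_iff_eq] at hswap

theorem card_apply_ne_zero_eq_sum [Fintype M] {l : ℕ} (f : M [⋀^Fin (l + 1)]→ₗ[R] N) :
    Nat.card {v : Fin (l + 1) → M // f v ≠ 0} =
      ∑ x, Nat.card {w : Fin l → M // f.curryLeft x w ≠ 0} := by
  rw [← Nat.card_sigma]
  refine Nat.card_congr <| (Equiv.subtypeEquiv (Fin.consEquiv fun _ => M).symm fun v => ?_).trans
    (Equiv.subtypeProdEquivSigmaSubtype fun x w => f.curryLeft x w ≠ 0)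
  rw [Fin.consEquiv_symm_apply, curryLeft_apply_apply, Matrix.vecCons, Fin.cons_self_tail]

end CommRing

variable {F U : Type*} [Field F] [AddCommGroup U] [Module F U]

theorem linearIndependent_of_apply_ne_zero {ι : Type*} {f : U [⋀^ι]→ₗ[F] F} {v : ι → U}
    (hv : f v ≠ 0) : LinearIndependent F v :=
  not_not.1 (mt (f.map_linearDependent v) hv)

theorem ker_curryLeft_inf_span_eq_bot {l : ℕ} (f : U [⋀^Fin (l + 1)]→ₗ[F] F)
    {v : Fin (l + 1) → U} (hv : f v ≠ 0) :
    LinearMap.ker f.curryLeft ⊓ span F (Set.range v) = ⊥ := by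
  classical
  refine (Submodule.eq_bot_iff _).2 ?_
  rintro x ⟨hx, hxv⟩
  obtain ⟨c, rfl⟩ := (mem_span_range_iff_exists_fun F).1 hxv
  suffices ∀ j, c j = 0 by simp [this]
  intro j
  -- substituting `x` for `v j` only keeps the `j`-th term of `x = ∑ c i • v i`
  have hj : f (Function.update v j (∑ i, c i • v i)) = c j • f v := by
    rw [map_update_sum, sum_eq_single j]
    · rw [map_update_smul, Function.update_eq_self]
    · intro i _ hij
      rw [map_update_smul, f.map_update_self v hij.symm, smul_zero]
    · simp
  rw [apply_eq_zero_of_mem_ker_curryLeft f hx (Function.update_self j _ v)] at hj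
  exact (smul_eq_zero.1 hj.symm).resolve_right hv

theorem finrank_ker_curryLeft_add_le [FiniteDimensional F U] {l : ℕ}
    (f : U [⋀^Fin (l + 1)]→ₗ[F] F) {v : Fin (l + 1) → U} (hv : f v ≠ 0) :
    finrank F (LinearMap.ker f.curryLeft) + (l + 1) ≤ finrank F U := by
  have hsum := finrank_sup_add_finrank_inf_eq (LinearMap.ker f.curryLeft) (span F (Set.range v))
  rw [ker_curryLeft_inf_span_eq_bot f hv, finrank_bot, add_zero,
    finrank_span_eq_card (f.linearIndependent_of_apply_ne_zero hv), Fintype.card_fin] at hsum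
  exact hsum ▸ Submodule.finrank_le _

section FiniteField

variable [Fintype F] [Finite U]

local notation "q" => Fintype.card F
local notation "n" => finrank F U

theorem prod_le_card_apply_ne_zero {l : ℕ} (f : U [⋀^Fin l]→ₗ[F] F) (hf : f ≠ 0) :
    ∏ i ∈ range l, (q ^ n - q ^ (n - (i + 1))) ≤ Nat.card {v : Fin l → U // f v ≠ 0} := by
  classical
  have : Fintype U := Fintype.ofFinite U
  obtain ⟨v, hv⟩ := DFunLike.ne_iff.1 hf
  induction l with
  | zero =>
    have : Nonempty {v : Fin 0 → U // f v ≠ 0} := ⟨⟨v, hv⟩⟩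
    rw [prod_range_zero]
    exact Nat.card_pos
  | succ l ih =>
    have hdim := finrank_ker_curryLeft_add_le f hv
    set K := LinearMap.ker f.curryLeft
    have hK : Fintype.card K ≤ q ^ (n - (l + 1)) := by
      rw [card_eq_pow_finrank (K := F)]
      exact Nat.pow_le_pow_right Fintype.card_pos (by omega)
    have hcompl : q ^ n - q ^ (n - (l + 1)) ≤ #{x | x ∉ K} := by
      rw [← Fintype.card_subtype, Fintype.card_subtype_compl, card_eq_pow_finrank (K := F) (V := U)]
      omega
    calc ∏ i ∈ range (l + 1), (q ^ n - q ^ (n - (i + 1)))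
        ≤ #{x | x ∉ K} • ∏ i ∈ range l, (q ^ n - q ^ (n - (i + 1))) := by
          rw [prod_range_succ, mul_comm, smul_eq_mul]
          exact Nat.mul_le_mul_right _ hcompl
      _ ≤ ∑ x ∈ {x | x ∉ K}, Nat.card {w : Fin l → U // f.curryLeft x w ≠ 0} :=
          card_nsmul_le_sum _ _ _ fun x hx =>
            have hx : f.curryLeft x ≠ 0 := (mem_filter.1 hx).2
            have ⟨w, hw⟩ := DFunLike.ne_iff.1 hx
            ih _ hx w hw
      _ ≤ ∑ x, Nat.card {w : Fin l → U // f.curryLeft x w ≠ 0} :=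
          sum_le_sum_of_subset (filter_subset _ _)
      _ = Nat.card {v : Fin (l + 1) → U // f v ≠ 0} := (card_apply_ne_zero_eq_sum f).symm

theorem pow_le_card_compLinearMap_ne_zero {l : ℕ} (f : U [⋀^Fin l]→ₗ[F] F) (hf : f ≠ 0) :
    q ^ (l * (n - l)) ≤
      Nat.card {M : Submodule F U // finrank F M = l ∧ f.compLinearMap M.subtype ≠ 0} := by
  obtain ⟨v, hv⟩ := DFunLike.ne_iff.1 hf
  have hl : l ≤ n := by
    simpa using (linearIndependent_of_apply_ne_zero hv).fintype_card_le_finrank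
  have htuples : Nat.card {v : Fin l → U // f v ≠ 0} = Nat.card {v : Fin l → U //
      LinearIndependent F v ∧ f.compLinearMap (span F (Set.range v)).subtype ≠ 0} :=
    Nat.card_congr <| Equiv.subtypeEquivRight fun v =>
      ⟨fun h => ⟨linearIndependent_of_apply_ne_zero h,
        (compLinearMap_span_subtype_eq_zero_iff (linearIndependent_of_apply_ne_zero h)).not.2 h⟩,
      fun h => (compLinearMap_span_subtype_eq_zero_iff h.1).not.1 h.2⟩
  have hbound := prod_le_card_apply_ne_zero f hf
  rw [htuples.trans (card_linearIndependent_span l fun M => f.compLinearMap M.subtype ≠ 0),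
    prod_range_pow_sub_pow_sub _ hl] at hbound
  exact Nat.le_of_mul_le_mul_right hbound <| prod_pos fun i hi =>
    Nat.sub_pos_of_lt (Nat.pow_lt_pow_right Fintype.one_lt_card (mem_range.1 hi))

end FiniteField

end AlternatingMap

section Pluecker

variable {F V : Type*} [Field F] [AddCommGroup V] [Module F V] {l : ℕ}

noncomputable def plueckerForm (φ : ⋀[F]^l V →ₗ[F] F) : V [⋀^Fin l]→ₗ[F] F :=
  φ.compAlternatingMap (exteriorPower.ιMulti F l)

variable [FiniteDimensional F V]

theorem liesOn_iff_forall_wedge_eq_zero {φ : ⋀[F]^l V →ₗ[F] F} {L : Submodule F V}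
    (hL : finrank F L = l) :
    LiesOn F V l φ L ↔ ∀ ω : Fin l → V, (∀ i, ω i ∈ L) → φ (wedge F V l ω) = 0 := by
  constructor
  · rintro ⟨ω₀, -, hω₀, rfl, h₀⟩ ω hω
    have hvan := (AlternatingMap.compLinearMap_span_subtype_eq_zero_iff
      (f := plueckerForm φ) hω₀).2 h₀
    exact DFunLike.congr_fun hvan fun i => ⟨ω i, hω i⟩
  · intro h
    let b := finBasisOfFinrankEq F L hL
    refine ⟨L.subtype ∘ b, fun i => (b i).2, b.linearIndependent.map' _ L.ker_subtype, ?_,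
      h _ fun i => (b i).2⟩
    rw [Set.range_comp, span_image, b.span_eq, map_subtype_top]

theorem card_liesOn_le_card_compLinearMap_eq_zero [Finite F] (φ : ⋀[F]^l V →ₗ[F] F)
    (W : Submodule F V) :
    Nat.card {L : Submodule F V | finrank F L = l ∧ L ≤ W ∧ LiesOn F V l φ L} ≤
      Nat.card {M : Submodule F W // finrank F M = l ∧
        ((plueckerForm φ).compLinearMap W.subtype).compLinearMap M.subtype = 0} := by
  have : Finite W := Module.finite_of_finite F
  refine Nat.card_le_card_of_injective (fun L => ⟨comap W.subtype L.1, ?_, ?_⟩) ?_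
  · rw [(comapSubtypeEquivOfLe L.2.2.1).finrank_eq, L.2.1]
  · ext w
    exact (liesOn_iff_forall_wedge_eq_zero L.2.1).1 L.2.2.2 _ fun i => (w i).2
  · rintro ⟨L₁, hL₁⟩ ⟨L₂, hL₂⟩ h
    simpa using (MapSubtype.orderIso W).symm.injective (a₁ := ⟨L₁, hL₁.2.1⟩)
      (a₂ := ⟨L₂, hL₂.2.1⟩) (congrArg Subtype.val h)

end Pluecker

theorem stmt11_general (F : Type*) [Field F] [Fintype F] (V : Type*) [AddCommGroup V] [Module F V]
    [FiniteDimensional F V] (q m l : ℕ) (hq : Fintype.card F = q)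
    (hlm : l ≤ m - 1)
    (W : Submodule F V) (hW : finrank F W = m - 1)
    (φ : ⋀[F]^l V →ₗ[F] F)
    (hne : ¬ ∀ L : Submodule F V, finrank F L = l → L ≤ W → LiesOn F V l φ L) :
    (Nat.card {L : Submodule F V | finrank F L = l ∧ L ≤ W ∧ LiesOn F V l φ L} : ℚ) ≤
      gaussBinom q (m - 1) l - (q : ℚ) ^ (l * (m - 1 - l)) := by
  subst hq
  rw [← hW] at hlm ⊢
  have : Finite W := Module.finite_of_finite F
  set g := (plueckerForm φ).compLinearMap W.subtype
  have hg : g ≠ 0 := fun hg => hne fun L hL hLW =>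
    (liesOn_iff_forall_wedge_eq_zero hL).2 fun ω hω =>
      DFunLike.congr_fun hg fun i => (⟨ω i, hLW (hω i)⟩ : W)
  have hsplit := Nat.card_subtype_and_add_card_subtype_and_not
    (fun M : Submodule F W => finrank F M = l) (fun M => g.compLinearMap M.subtype = 0)
  rw [← card_grassmannian_eq_gaussBinom hlm, ← hsplit, le_sub_iff_add_le]
  exact_mod_cast Nat.add_le_add (card_liesOn_le_card_compLinearMap_eq_zero φ W)
    (g.pow_le_card_compLinearMap_ne_zero hg)

/-- Let `1 ≤ ℓ ≤ m−1`, let `W` be an `(m−1)`-dimensional subspace of `V`, and let `Π` be a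
hyperplane of `P(⋀^ℓ V)` such that not every `ℓ`-dimensional subspace of `W` lies on `Π`.
Then `|{L ∈ G(ℓ,W) : L lies on Π}| ≤ [m−1 ℓ]_q − q^{ℓ(m−1−ℓ)}`. -/
theorem stmt11 (F : Type*) [Field F] [Fintype F] (V : Type*) [AddCommGroup V] [Module F V]
    [FiniteDimensional F V] (q m l : ℕ) (hq : Fintype.card F = q)
    (hV : finrank F V = m) (hl : 1 ≤ l) (hlm : l ≤ m - 1)
    (W : Submodule F V) (hW : finrank F W = m - 1)
    (φ : ⋀[F]^l V →ₗ[F] F) (hφ : φ ≠ 0)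
    (hne : ¬ ∀ L : Submodule F V, finrank F L = l → L ≤ W → LiesOn F V l φ L) :
    (Nat.card {L : Submodule F V | finrank F L = l ∧ L ≤ W ∧ LiesOn F V l φ L} : ℚ) ≤
      gaussBinom q (m - 1) l - (q : ℚ) ^ (l * (m - 1 - l)) :=
  stmt11_general F V q m l hq hlm W hW φ hne
end

section
/- Let 2 ≤ ℓ ≤ m−2 and let Π be a hyperplane of the Plücker projective space P(⋀^ℓ V), determined by the nonzero functional φ. If every L ∈ Ω_θ lies on Π, then Π is decomposable. -/
open Module

variable (F : Type*) [Field F] (V : Type*) [AddCommGroup V] [Module F V]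

/-- Membership in the Schubert variety `Ω_θ`, where, relative to a complete flag `Vflag` in `V`
(with `dim Vflag i = i`), `θ₁ = m−ℓ−1` and `θ_j = m−ℓ+j` for `j = 2, …, ℓ`:
`L ∈ Ω_θ` iff `dim L = ℓ` and `dim (L ∩ V_{θ_j}) ≥ j` for all `j = 1, …, ℓ`. -/
def InSchubertTheta (m l : ℕ) (Vflag : ℕ → Submodule F V) (L : Submodule F V) : Prop :=
  finrank F L = l ∧ ∀ j : ℕ, 1 ≤ j → j ≤ l →
    j ≤ finrank F ↥(L ⊓ Vflag (if j = 1 then m - l - 1 else m - l + j))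

section Aux

open ExteriorAlgebra

lemma comp_append_aux {α β : Type*} {a b : ℕ} (g : α → β) (u : Fin a → α) (v : Fin b → α) :
    g ∘ Fin.append u v = Fin.append (g ∘ u) (g ∘ v) := by
  funext i
  refine Fin.addCases (fun j => ?_) (fun j => ?_) i <;>
    simp [Fin.append_left, Fin.append_right]

lemma iMulti_append_aux {a b : ℕ} (u : Fin a → V) (v : Fin b → V) :
    ιMulti F (a + b) (Fin.append u v) = ιMulti F a u * ιMulti F b v := by
  rw [ιMulti_apply, ιMulti_apply, ιMulti_apply, ← List.prod_append, ← List.ofFn_fin_append]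
  congr 1
  exact congrArg List.ofFn (comp_append_aux (ι F) u v)

lemma iMulti_cast_aux {n n' : ℕ} (h : n' = n) (u : Fin n → V) :
    ιMulti F n' (u ∘ Fin.cast h) = ιMulti F n u := by
  subst h; rfl

lemma iMulti_one_aux (x : V) : ιMulti F 1 ![x] = ι F x := by
  rw [ιMulti_apply]
  simp

lemma combined_mul_aux {k1 l m : ℕ} (hm : m = k1 + 1 + l) (u : Fin k1 → V) (x : V)
    (t : Fin l → V) :
    ιMulti F k1 u * (ι F x * ιMulti F l t) =
      ιMulti F m ((Fin.append (Fin.append u ![x]) t) ∘ Fin.cast hm) := by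
  rw [iMulti_cast_aux, iMulti_append_aux, iMulti_append_aux, iMulti_one_aux, mul_assoc]

/-- `ιMulti` with codomain restricted to the exterior power. -/
noncomputable def wedgeAlt (n : ℕ) : V [⋀^Fin n]→ₗ[F] ⋀[F]^n V :=
  (ιMulti F n).codRestrict (⋀[F]^n V) (fun v => ιMulti_range F n (Set.mem_range_self v))

lemma wedgeAlt_apply (n : ℕ) (v : Fin n → V) : wedgeAlt F V n v = wedge F V n v := rfl

lemma wedge_zero_of_liesOn {l : ℕ} (φ : ⋀[F]^l V →ₗ[F] F) {L : Submodule F V}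
    (h : LiesOn F V l φ L) (ω : Fin l → V)
    (hsp : Submodule.span F (Set.range ω) = L) :
    φ (wedge F V l ω) = 0 := by
  classical
  obtain ⟨ω', hmem', hind', hsp', hz⟩ := h
  let b : Basis (Fin l) F L := (Basis.span hind').map (LinearEquiv.ofEq _ _ hsp')
  have hb : ∀ i, (b i : V) = ω' i := by
    intro i
    simp [b, Basis.span_apply]
  let A : L [⋀^Fin l]→ₗ[F] F :=
    φ.compAlternatingMap ((wedgeAlt F V l).compLinearMap L.subtype)
  have hA : ∀ u : Fin l → L, A u = φ (wedge F V l (fun i => (u i : V))) := fun u => rfl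
  have hAb : A ⇑b = 0 := by
    rw [hA]
    have : (fun i => ((b i : V))) = ω' := funext hb
    rw [this, hz]
  have hdet := AlternatingMap.eq_smul_basis_det b A
  have hmem : ∀ i, ω i ∈ L := by
    intro i
    rw [← hsp]
    exact Submodule.subset_span (Set.mem_range_self i)
  have := congrFun (congrArg DFunLike.coe hdet) (fun i => (⟨ω i, hmem i⟩ : L))
  rw [hA] at this
  simpa [hAb] using this

lemma exists_adapted_basis [FiniteDimensional F V] {m k : ℕ} (hV : finrank F V = m)
    (W : Submodule F V) (hW : finrank F W = k) (hkm : k ≤ m) :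
    ∃ E : Basis (Fin m) F V, ∀ i : Fin m, (i : ℕ) < k → E i ∈ W := by
  obtain ⟨W', hcompl⟩ := Submodule.exists_isCompl W
  have hW' : finrank F W' = m - k := by
    have := Submodule.finrank_add_eq_of_isCompl hcompl
    omega
  let bW : Basis (Fin k) F W := finBasisOfFinrankEq F W hW
  let bW' : Basis (Fin (m - k)) F W' := finBasisOfFinrankEq F W' hW'
  let E0 : Basis (Fin k ⊕ Fin (m - k)) F V :=
    (bW.prod bW').map (Submodule.prodEquivOfIsCompl W W' hcompl)
  let r : Fin k ⊕ Fin (m - k) ≃ Fin m := finSumFinEquiv.trans (finCongr (by omega))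
  refine ⟨E0.reindex r, fun i hi => ?_⟩
  have hri : r (Sum.inl ⟨(i : ℕ), hi⟩) = i := by
    simp [r, Fin.ext_iff]
  rw [Basis.reindex_apply, ← hri, Equiv.symm_apply_apply]
  have : E0 (Sum.inl ⟨(i : ℕ), hi⟩) = (bW ⟨(i : ℕ), hi⟩ : V) := by
    simp [E0, Basis.prod_apply, Submodule.coe_prodEquivOfIsCompl]
  rw [this]
  exact (bW _).2

variable [FiniteDimensional F V] {m : ℕ}

omit [FiniteDimensional F V] in
lemma det_comp_ne_zero (E : Basis (Fin m) F V) {σ : Fin m → Fin m}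
    (hσ : Function.Injective σ) : E.det (fun i => E (σ i)) ≠ 0 := by
  have hbij : Function.Bijective σ := Finite.injective_iff_bijective.mp hσ
  let π : Equiv.Perm (Fin m) := Equiv.ofBijective σ hbij
  have : (fun i => E (σ i)) = ⇑E ∘ ⇑π := rfl
  rw [this, AlternatingMap.map_perm, Basis.det_self]
  rcases Int.units_eq_one_or (Equiv.Perm.sign π) with h | h <;> simp [h]

omit [FiniteDimensional F V] in
lemma det_comp_eq_zero (E : Basis (Fin m) F V) {σ : Fin m → Fin m}
    (hσ : ¬ Function.Injective σ) : E.det (fun i => E (σ i)) = 0 := by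
  apply AlternatingMap.map_eq_zero_of_not_injective
  intro h
  exact hσ (fun i j hij => h (congrArg E hij))

/-- The determinant functional on the exterior algebra: kills all degrees except `m`,
where it is given by `E.det`. -/
noncomputable def Dfun (E : Basis (Fin m) F V) : ExteriorAlgebra F V →ₗ[F] F :=
  liftAlternating (Pi.single m E.det)

omit [FiniteDimensional F V] in
lemma Dfun_iMulti (E : Basis (Fin m) F V) (u : Fin m → V) :
    Dfun F V E (ιMulti F m u) = E.det u := by
  rw [Dfun, liftAlternating_apply_ιMulti, Pi.single_eq_same]

omit [FiniteDimensional F V] in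
lemma Dfun_iMulti_ne (E : Basis (Fin m) F V) {n : ℕ} (hn : n ≠ m) (u : Fin n → V) :
    Dfun F V E (ιMulti F n u) = 0 := by
  rw [Dfun, liftAlternating_apply_ιMulti, Pi.single_eq_of_ne hn]
  rfl

section beta

variable {k1 l : ℕ} (hm : m = k1 + 1 + l) (k : Fin m) (σ : Fin l → Fin m)

/-- The combined index family: `[0,…,k1-1], k, σ`. -/
def betaFam : Fin m → Fin m :=
  (Fin.append (Fin.append (Fin.castLE (by omega)) ![k]) σ) ∘ Fin.cast hm

lemma betaFam_lt {i : Fin m} (hi : (i : ℕ) < k1) : ((betaFam hm k σ i : Fin m) : ℕ) = i := by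
  have h1 : Fin.cast hm i = Fin.castAdd l (Fin.castAdd 1 ⟨(i : ℕ), hi⟩) := by
    simp [Fin.ext_iff]
  rw [betaFam, Function.comp_apply, h1, Fin.append_left, Fin.append_left]
  rfl

lemma betaFam_eq {i : Fin m} (hi : (i : ℕ) = k1) : betaFam hm k σ i = k := by
  have h1 : Fin.cast hm i = Fin.castAdd l (Fin.natAdd k1 ⟨0, Nat.zero_lt_one⟩) := by
    simp [Fin.ext_iff, hi]
  rw [betaFam, Function.comp_apply, h1, Fin.append_left, Fin.append_right]
  rfl

lemma betaFam_right (j : Fin l) :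
    betaFam hm k σ (Fin.cast hm.symm (Fin.natAdd (k1 + 1) j)) = σ j := by
  have h1 : Fin.cast hm (Fin.cast hm.symm (Fin.natAdd (k1 + 1) j)) =
      Fin.natAdd (k1 + 1) j := by
    simp [Fin.ext_iff]
  rw [betaFam, Function.comp_apply, h1, Fin.append_right]

lemma betaFam_trichotomy (i : Fin m) :
    (i : ℕ) < k1 ∨ (i : ℕ) = k1 ∨ ∃ j : Fin l, i = Fin.cast hm.symm (Fin.natAdd (k1 + 1) j) := by
  rcases lt_trichotomy (i : ℕ) k1 with h | h | h
  · exact Or.inl h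
  · exact Or.inr (Or.inl h)
  · refine Or.inr (Or.inr ⟨⟨(i : ℕ) - (k1 + 1), by omega⟩, ?_⟩)
    simp only [Fin.ext_iff, Fin.coe_cast, Fin.coe_natAdd]
    omega

omit [FiniteDimensional F V] in
lemma E_comp_betaFam (E : Basis (Fin m) F V) (t : Fin l → V) (ht : t = fun j => E (σ j)) :
    ⇑E ∘ betaFam hm k σ =
      (Fin.append (Fin.append (fun i : Fin k1 => E (Fin.castLE (by omega) i)) ![E k]) t) ∘
        Fin.cast hm := by
  subst ht
  funext i
  rw [betaFam]
  show (⇑E ∘ Fin.append (Fin.append (Fin.castLE (by omega)) ![k]) σ) (Fin.cast hm i) = _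
  rw [comp_append_aux, comp_append_aux]
  congr 1
  funext j
  refine Fin.addCases (fun j1 => ?_) (fun j1 => ?_) j <;>
    simp [Fin.append_left, Fin.append_right, Matrix.cons_val_fin_one]

end beta

end Aux

/-- If `2 ≤ ℓ ≤ m−2` and every `L ∈ Ω_θ` lies on the hyperplane `Π` of `P(⋀^ℓ V)` determined
by the nonzero functional `φ`, then `Π` is decomposable. -/
theorem stmt13 (F : Type*) [Field F] [Fintype F] (V : Type*) [AddCommGroup V] [Module F V]
    [FiniteDimensional F V] (q m l : ℕ) (hq : Fintype.card F = q)
    (hV : finrank F V = m) (hl : 2 ≤ l) (hlm : l ≤ m - 2)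
    (Vflag : ℕ → Submodule F V) (hmono : Monotone Vflag)
    (hdim : ∀ i : ℕ, i ≤ m → finrank F (Vflag i) = i) (htop : Vflag m = ⊤)
    (φ : ⋀[F]^l V →ₗ[F] F) (hφ : φ ≠ 0)
    (hall : ∀ L : Submodule F V, InSchubertTheta F V m l Vflag L → LiesOn F V l φ L) :
    IsDecomposable F V m l (by omega) φ := by
  classical
  open ExteriorAlgebra in
  have hlm2 : l + 2 ≤ m := by omega
  set k1 := m - l - 1 with hk1def
  have hm' : m = k1 + 1 + l := by omega
  have hk1m : k1 ≤ m := by omega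
  obtain ⟨E, hE⟩ := exists_adapted_basis F V hV (Vflag k1) (hdim k1 (by omega)) hk1m
  set D := Dfun F V E with hD
  -- the set of "large" indices
  set T : Finset (Fin m) := Finset.univ.filter (fun i => k1 ≤ (i : ℕ)) with hT
  have hmemT : ∀ i : Fin m, i ∈ T ↔ k1 ≤ (i : ℕ) := by
    intro i; simp [hT]
  have hTcard : T.card = l + 1 := by
    have hinj : Function.Injective (fun j : Fin (l + 1) => (⟨k1 + (j : ℕ), by omega⟩ : Fin m)) := by
      intro a b hab
      simp only [Fin.ext_iff] at hab ⊢
      omega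
    have himg : T = Finset.image (fun j : Fin (l + 1) => (⟨k1 + (j : ℕ), by omega⟩ : Fin m))
        Finset.univ := by
      ext i
      simp only [hmemT, Finset.mem_image, Finset.mem_univ, true_and]
      constructor
      · intro hi
        exact ⟨⟨(i : ℕ) - k1, by omega⟩, by simp only [Fin.ext_iff]; omega⟩
      · rintro ⟨j, rfl⟩
        simp
    rw [himg, Finset.card_image_of_injective _ hinj, Finset.card_univ, Fintype.card_fin]
  have hTe : ∀ k ∈ T, (T.erase k).card = l := by
    intro k hk
    rw [Finset.card_erase_of_mem hk, hTcard]
    omega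
  -- the canonical strictly monotone enumerations of `T.erase k`
  set sE : Fin m → (Fin l → Fin m) := fun k =>
    if h : (T.erase k).card = l then ⇑((T.erase k).orderEmbOfFin h) else (fun _ => k) with hsE
  have hsEdef : ∀ k (hk : k ∈ T), sE k = ⇑((T.erase k).orderEmbOfFin (hTe k hk)) := by
    intro k hk
    simp only [hsE, dif_pos (hTe k hk)]
  have hsEmem : ∀ k (hk : k ∈ T) (j : Fin l), sE k j ∈ T.erase k := by
    intro k hk j
    rw [hsEdef k hk]
    exact Finset.orderEmbOfFin_mem _ _ _
  -- vanishing of φ on wedges of basis vectors hitting `Vflag k1`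
  have hvanish : ∀ σ : Fin l → Fin m, Function.Injective σ → (∃ i, ((σ i : Fin m) : ℕ) < k1) →
      φ (wedge F V l (fun j => E (σ j))) = 0 := by
    rintro σ hσ ⟨i₀, hi₀⟩
    have hσE : Function.Injective (⇑E ∘ σ) := E.injective.comp hσ
    have hind : LinearIndependent F (fun j => E (σ j)) := E.linearIndependent.comp σ hσ
    set L := Submodule.span F (Set.range (fun j => E (σ j))) with hLdef
    have hrank : finrank F L = l := by
      rw [hLdef, finrank_span_eq_card hind, Fintype.card_fin]
    have hsch : InSchubertTheta F V m l Vflag L := by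
      refine ⟨hrank, ?_⟩
      intro j hj1 hjl
      by_cases hj : j = 1
      · subst hj
        rw [if_pos rfl]
        have hEmem : E (σ i₀) ∈ Vflag k1 := hE _ hi₀
        have hEL : E (σ i₀) ∈ L := Submodule.subset_span ⟨i₀, rfl⟩
        have h1 : Submodule.span F {E (σ i₀)} ≤ L ⊓ Vflag (m - l - 1) := by
          rw [Submodule.span_singleton_le_iff_mem]
          exact ⟨hEL, hEmem⟩
        calc 1 = finrank F (Submodule.span F {E (σ i₀)}) :=
              (finrank_span_singleton (E.ne_zero _)).symm
          _ ≤ _ := Submodule.finrank_mono h1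
      · rw [if_neg hj]
        have hdimU : finrank F (Vflag (m - l + j)) = m - l + j := hdim _ (by omega)
        have hsum := Submodule.finrank_sup_add_finrank_inf_eq L (Vflag (m - l + j))
        have hle : finrank F ↥(L ⊔ Vflag (m - l + j)) ≤ m := by
          rw [← hV]
          exact Submodule.finrank_le _
        omega
    exact wedge_zero_of_liesOn F V φ (hall L hsch) _ rfl
  -- evaluation of D on combined products
  set Efirst : Fin k1 → V := fun i => E (Fin.castLE hk1m i) with hEfirst
  have hcomb : ∀ (k : Fin m) (σ : Fin l → Fin m),
      D (ιMulti F k1 Efirst * (ι F (E k) * ιMulti F l (fun j => E (σ j)))) =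
        E.det (fun i => E (betaFam hm' k σ i)) := by
    intro k σ
    rw [combined_mul_aux F V hm' Efirst (E k) (fun j => E (σ j)),
      ← E_comp_betaFam F V hm' k σ E _ rfl, hD, Dfun_iMulti]
    rfl
  -- nonvanishing of the diagonal coefficients
  have hdetne : ∀ k (hk : k ∈ T), E.det (fun i => E (betaFam hm' k (sE k) i)) ≠ 0 := by
    intro k hk
    apply det_comp_ne_zero
    intro i i' hii'
    have hkk1 : k1 ≤ (k : ℕ) := (hmemT k).mp hk
    rcases betaFam_trichotomy hm' i with hi | hi | ⟨j, rfl⟩ <;>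
      rcases betaFam_trichotomy hm' i' with hi' | hi' | ⟨j', rfl⟩
    · apply Fin.ext
      rw [← betaFam_lt hm' k (sE k) hi, ← betaFam_lt hm' k (sE k) hi', hii']
    · exfalso
      rw [betaFam_eq hm' k (sE k) hi'] at hii'
      have := betaFam_lt hm' k (sE k) hi
      rw [hii'] at this
      omega
    · exfalso
      rw [betaFam_right hm' k (sE k) j'] at hii'
      have hmem := hsEmem k hk j'
      have : k1 ≤ ((sE k j' : Fin m) : ℕ) := (hmemT _).mp (Finset.mem_of_mem_erase hmem)
      have h2 := betaFam_lt hm' k (sE k) hi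
      rw [hii'] at h2
      omega
    · exfalso
      rw [betaFam_eq hm' k (sE k) hi] at hii'
      have := betaFam_lt hm' k (sE k) hi'
      rw [← hii'] at this
      omega
    · apply Fin.ext
      omega
    · exfalso
      rw [betaFam_eq hm' k (sE k) hi, betaFam_right hm' k (sE k) j'] at hii'
      exact (Finset.ne_of_mem_erase (hsEmem k hk j')) hii'.symm
    · exfalso
      rw [betaFam_right hm' k (sE k) j] at hii'
      have hmem := hsEmem k hk j
      have : k1 ≤ ((sE k j : Fin m) : ℕ) := (hmemT _).mp (Finset.mem_of_mem_erase hmem)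
      have h2 := betaFam_lt hm' k (sE k) hi'
      rw [← hii'] at h2
      omega
    · exfalso
      rw [betaFam_eq hm' k (sE k) hi', betaFam_right hm' k (sE k) j] at hii'
      exact (Finset.ne_of_mem_erase (hsEmem k hk j)) hii'
    · have hj : j = j' := by
        have hinj : Function.Injective (sE k) := by
          rw [hsEdef k hk]
          exact (Finset.orderEmbOfFin (T.erase k) (hTe k hk)).injective
        apply hinj
        rw [← betaFam_right hm' k (sE k) j, ← betaFam_right hm' k (sE k) j', hii']
      rw [hj]
  -- the coefficients and the vector v
  set a : Fin m → F := fun k =>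
    φ (wedge F V l (fun j => E (sE k j))) / E.det (fun i => E (betaFam hm' k (sE k) i)) with ha
  set v : V := ∑ k ∈ T, a k • E k with hv
  have hmlk : m - l = k1 + 1 := by omega
  set w : Fin (m - l) → V := (Fin.append Efirst ![v]) ∘ Fin.cast hmlk with hwdef
  have hIw : ιMulti F (m - l) w = ιMulti F k1 Efirst * ι F v := by
    rw [hwdef, iMulti_cast_aux, iMulti_append_aux, iMulti_one_aux]
  have hιv : ι F v = ∑ k ∈ T, a k • ι F (E k) := by
    rw [hv, map_sum]
    simp
  -- expansion of the right-hand side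
  have hexpand : ∀ t : Fin l → Fin m,
      D (ιMulti F (m - l) w * ιMulti F l (fun j => E (t j))) =
        ∑ k ∈ T, a k * E.det (fun i => E (betaFam hm' k t i)) := by
    intro t
    rw [hIw, mul_assoc, hιv, Finset.sum_mul, Finset.mul_sum, map_sum]
    refine Finset.sum_congr rfl (fun k hk => ?_)
    rw [smul_mul_assoc, mul_smul_comm, map_smul, hcomb k t, smul_eq_mul]
  -- the core identity on wedges of basis vectors
  have hcore : ∀ u : Fin l → V, φ (wedge F V l u) = D (ιMulti F (m - l) w * ιMulti F l u) := by
    have heq : φ.compAlternatingMap (wedgeAlt F V l) =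
        (D ∘ₗ LinearMap.mulLeft F (ιMulti F (m - l) w)).compAlternatingMap (ιMulti F l) := by
      apply Basis.ext_alternating E
      intro ν hν
      -- factor ν through a strictly monotone map and a permutation
      set S : Finset (Fin m) := Finset.image ν Finset.univ with hS
      have hScard : S.card = l := by
        rw [hS, Finset.card_image_of_injective _ hν, Finset.card_univ, Fintype.card_fin]
      set s : Fin l → Fin m := ⇑(S.orderEmbOfFin hScard) with hs
      have hsinj : Function.Injective s := (S.orderEmbOfFin hScard).injective
      have hmem' : ∀ i, ν i ∈ S := fun i => Finset.mem_image_of_mem _ (Finset.mem_univ i)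
      set g : Fin l → Fin l := fun i => (S.orderIsoOfFin hScard).symm ⟨ν i, hmem' i⟩ with hg
      have hginj : Function.Injective g := by
        intro i j hij
        apply hν
        have h2 : ((S.orderIsoOfFin hScard) (g i) : Fin m) =
            ((S.orderIsoOfFin hScard) (g j) : Fin m) := by rw [hij]
        simpa [hg, OrderIso.apply_symm_apply] using h2
      set π : Equiv.Perm (Fin l) := Equiv.ofBijective g (Finite.injective_iff_bijective.mp hginj)
        with hπ
      have hfactor : ∀ i, ν i = s (π i) := by
        intro i
        show ν i = s (g i)
        rw [hs]
        rw [← Finset.coe_orderIsoOfFin_apply]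
        simp [hg]
      have hre : (fun i => E (ν i)) = (fun i => E (s i)) ∘ ⇑π := by
        funext i
        simp [hfactor i]
      rw [hre, AlternatingMap.map_perm, AlternatingMap.map_perm]
      congr 1
      -- now prove the identity for the monotone enumeration s
      simp only [LinearMap.compAlternatingMap_apply, LinearMap.coe_comp, Function.comp_apply,
        LinearMap.mulLeft_apply, wedgeAlt_apply]
      rw [hexpand s]
      by_cases hc : ∃ i, ((s i : Fin m) : ℕ) < k1
      · -- case A : s meets the flag subspace
        rw [hvanish s hsinj hc]
        obtain ⟨i₀, hi₀⟩ := hc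
        symm
        refine Finset.sum_eq_zero (fun k hk => ?_)
        have hzero : E.det (fun i => E (betaFam hm' k s i)) = 0 := by
          apply det_comp_eq_zero
          intro hinj
          have h1 : betaFam hm' k s ⟨(s i₀ : ℕ), by omega⟩ = s i₀ := by
            apply Fin.ext
            exact betaFam_lt hm' k s hi₀
          have h2 : betaFam hm' k s (Fin.cast hm'.symm (Fin.natAdd (k1 + 1) i₀)) = s i₀ :=
            betaFam_right hm' k s i₀
          have h3 := hinj (h1.trans h2.symm)
          have h4 := congrArg Fin.val h3
          simp [Fin.ext_iff] at h4
          omega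
        rw [hzero, mul_zero]
      · -- case B : s avoids the flag subspace
        push_neg at hc
        have hST : S ⊆ T := by
          intro x hx
          have hxr : x ∈ Set.range s := by
            rw [hs, Finset.range_orderEmbOfFin]
            exact hx
          obtain ⟨j, rfl⟩ := hxr
          rw [hmemT]
          exact hc j
        obtain ⟨k₀, hk₀T, hk₀S⟩ : ∃ k₀ ∈ T, k₀ ∉ S := by
          by_contra hcon
          push_neg at hcon
          have : T ⊆ S := hcon
          have := Finset.card_le_card this
          omega
        have hSeq : S = T.erase k₀ := by
          apply Finset.eq_of_subset_of_card_le
          · intro x hx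
            exact Finset.mem_erase.mpr ⟨fun hxk => hk₀S (hxk ▸ hx), hST hx⟩
          · rw [hTe k₀ hk₀T, hScard]
        have hs_eq : s = sE k₀ := by
          rw [hsEdef k₀ hk₀T]
          refine Finset.orderEmbOfFin_unique (hTe k₀ hk₀T) (fun x => ?_)
            (S.orderEmbOfFin hScard).strictMono
          rw [← hSeq]
          exact Finset.orderEmbOfFin_mem _ _ _
        rw [hs_eq]
        rw [Finset.sum_eq_single k₀ ?h1 ?h2]
        · rw [ha]
          exact (div_mul_cancel₀ _ (hdetne k₀ hk₀T)).symm
        case h1 =>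
          intro k hk hkne
          have hzero : E.det (fun i => E (betaFam hm' k (sE k₀) i)) = 0 := by
            apply det_comp_eq_zero
            intro hinj
            have hkS : k ∈ T.erase k₀ := Finset.mem_erase.mpr ⟨hkne, hk⟩
            have hkr : k ∈ Set.range (sE k₀) := by
              rw [hsEdef k₀ hk₀T, Finset.range_orderEmbOfFin]
              exact hkS
            obtain ⟨j, hj⟩ := hkr
            have h1 : betaFam hm' k (sE k₀) ⟨k1, by omega⟩ = k :=
              betaFam_eq hm' k (sE k₀) rfl
            have h2 : betaFam hm' k (sE k₀) (Fin.cast hm'.symm (Fin.natAdd (k1 + 1) j)) = k := by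
              rw [betaFam_right hm' k (sE k₀) j, hj]
            have h3 := hinj (h1.trans h2.symm)
            have h4 := congrArg Fin.val h3
            simp [Fin.ext_iff] at h4
            omega
          rw [hzero, mul_zero]
        case h2 =>
          intro hk
          exact absurd hk₀T hk
    intro u
    have := DFunLike.congr_fun heq u
    simpa only [LinearMap.compAlternatingMap_apply, LinearMap.coe_comp, Function.comp_apply,
      LinearMap.mulLeft_apply, wedgeAlt_apply] using this
  -- assemble the decomposition
  refine ⟨w, D ∘ₗ (⋀[F]^m V).subtype, ?_, ?_⟩
  · intro h0
    have := DFunLike.congr_fun h0 (wedge F V m ⇑E)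
    simp only [LinearMap.coe_comp, Function.comp_apply, Submodule.coe_subtype,
      LinearMap.zero_apply] at this
    rw [show ((wedge F V m ⇑E : ⋀[F]^m V) : ExteriorAlgebra F V) = ιMulti F m ⇑E from rfl,
      hD, Dfun_iMulti, Basis.det_self] at this
    exact one_ne_zero this
  · intro x
    have hkey : ∀ y (hy : y ∈ Submodule.span F (Set.range (ιMulti F l (M := V)))),
        ∀ (hy2 : y ∈ ⋀[F]^l V), φ ⟨y, hy2⟩ = D (ιMulti F (m - l) w * y) := by
      intro y hy
      induction hy using Submodule.span_induction with
      | mem z hz =>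
        intro hy2
        obtain ⟨u, rfl⟩ := hz
        exact hcore u
      | zero =>
        intro hy2
        rw [show (⟨0, hy2⟩ : ⋀[F]^l V) = 0 from rfl]
        simp
      | add y z hy hz ihy ihz =>
        intro hy2
        have hy' : y ∈ ⋀[F]^l V := by
          rw [← ιMulti_span_fixedDegree]; exact hy
        have hz' : z ∈ ⋀[F]^l V := by
          rw [← ιMulti_span_fixedDegree]; exact hz
        have : (⟨y + z, hy2⟩ : ⋀[F]^l V) = ⟨y, hy'⟩ + ⟨z, hz'⟩ := rfl
        rw [this, map_add, ihy hy', ihz hz', mul_add, map_add]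
      | smul c y hy ihy =>
        intro hy2
        have hy' : y ∈ ⋀[F]^l V := by
          rw [← ιMulti_span_fixedDegree]; exact hy
        have : (⟨c • y, hy2⟩ : ⋀[F]^l V) = c • (⟨y, hy'⟩ : ⋀[F]^l V) := rfl
        rw [this, map_smul, ihy hy', mul_smul_comm, map_smul]
    have hx : (x : ExteriorAlgebra F V) ∈ Submodule.span F (Set.range (ιMulti F l (M := V))) := by
      rw [ιMulti_span_fixedDegree]
      exact x.2
    have := hkey (x : ExteriorAlgebra F V) hx x.2
    rw [show (⟨(x : ExteriorAlgebra F V), x.2⟩ : ⋀[F]^l V) = x from rfl] at this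
    exact this
end
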